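/- arXiv:2502.20994 — 5 statements merged into one kernel-verified Lean document; each statement's English description precedes it below -/
import Mathlib

section
/- Let C be a Krull–Schmidt abelian category with enough projectives and let R be an additive full subcategory of C. Then R is closed under kernels of epimorphisms (for every short exact sequence 0 → K → M → N → 0 with M, N in R, K is in R) if and only if R satisfies the restricted condition (R'3): for every short exact sequence 0 → K → M → Y → 0 with M in R and Y an indecomposable object of R, one has K in R. -/
open CategoryTheory Limits

attribute [local instance] CategoryTheory.Abelian.hasFiniteBiproducts

universe v u

variable {C : Type u} [Category.{v} C] [Abelian C]

/-- A class of objects of `C` is an *additive subcategory* if it is closed under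
isomorphisms, finite direct sums and direct summands. -/
def IsAdditiveSubcat (P : C → Prop) : Prop :=
  (∀ ⦃X Y : C⦄, (X ≅ Y) → P X → P Y) ∧
  (∀ ⦃X Y : C⦄, P X → P Y → P (X ⊞ Y)) ∧
  (∀ ⦃X Y : C⦄, P (X ⊞ Y) → P X ∧ P Y)

/-- A class of objects `P` *generates* `C` if every object of `C` admits an epimorphism
from an object of `P`. -/
def GeneratesCat (P : C → Prop) : Prop :=
  ∀ X : C, ∃ (G : C) (f : G ⟶ X), P G ∧ Epi f

/-- `P` is closed under extensions: for every short exact sequence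
`0 → A → E → B → 0` with `A, B` in `P`, `E` is in `P`. -/
def ClosedUnderExtensions (P : C → Prop) : Prop :=
  ∀ S : ShortComplex C, S.ShortExact → P S.X₁ → P S.X₃ → P S.X₂

/-- `P` is closed under kernels of epimorphisms: for every short exact sequence
`0 → K → M → N → 0` with `M, N` in `P`, `K` is in `P`. -/
def ClosedUnderKernelsOfEpis (P : C → Prop) : Prop :=
  ∀ S : ShortComplex C, S.ShortExact → P S.X₂ → P S.X₃ → P S.X₁

/-- A *resolving subcategory* of `C`: an additive class of objects which generates `C`,
is closed under extensions and closed under kernels of epimorphisms. -/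
def IsResolving (P : C → Prop) : Prop :=
  IsAdditiveSubcat P ∧ GeneratesCat P ∧ ClosedUnderExtensions P ∧ ClosedUnderKernelsOfEpis P

/-- The *resolving closure* of a class of objects: the intersection of all resolving
subcategories containing it (i.e. the smallest such subcategory). -/
def ResolvingClosure (X : C → Prop) : C → Prop :=
  fun A => ∀ P : C → Prop, IsResolving P → (∀ B, X B → P B) → P A

/-- The *additive closure* of a class of objects: the intersection of all additive
subcategories containing it. -/
def AdditiveClosure (P : C → Prop) : C → Prop :=
  fun A => ∀ Q : C → Prop, IsAdditiveSubcat Q → (∀ B, P B → Q B) → Q A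

/-- `C` is a *Krull–Schmidt* category: every object is isomorphic to a finite direct sum
of indecomposable objects with local endomorphism rings. -/
def IsKrullSchmidtCat (C : Type u) [Category.{v} C] [Abelian C] : Prop :=
  ∀ X : C, ∃ (n : ℕ) (f : Fin n → C),
    (∀ i, Indecomposable (f i) ∧ IsLocalRing (End (f i))) ∧ Nonempty (X ≅ ⨁ f)

/-- `Y` admits at most `p₀` indecomposable direct summands. -/
def AtMostIndecSummands (p₀ : ℕ) (Y : C) : Prop :=
  ∃ (n : ℕ) (f : Fin n → C), n ≤ p₀ ∧ (∀ i, Indecomposable (f i)) ∧ Nonempty (Y ≅ ⨁ f)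

/-- Condition `(Mid)_{p₀}`: for every short exact sequence `0 → X → Y → Z → 0` with `X`, `Z`
indecomposable, the middle object `Y` admits at most `p₀` indecomposable direct summands. -/
def SatisfiesMid (C : Type u) [Category.{v} C] [Abelian C] (p₀ : ℕ) : Prop :=
  ∀ S : ShortComplex C, S.ShortExact → Indecomposable S.X₁ → Indecomposable S.X₃ →
    AtMostIndecSummands p₀ S.X₂

/-!
Closure under kernels of epimorphisms onto `N` passes from `A` and `B` to `A ⊞ B`: for an
epimorphism `p : M ⟶ A ⊞ B` with `M` in `R`, the kernel of `p ≫ snd` lies in `R` (quotient `B`),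
and it maps epimorphically onto `ker snd ≅ A` with kernel `ker p`. By Krull–Schmidt every
quotient in `R` is a finite direct sum of indecomposables, each in `R` as a summand, so the
restricted condition propagates to all quotients by induction on the number of summands.
-/

lemma ShortComplex.shortExact_kernelSequence {X Y : C} (p : X ⟶ Y) [Epi p] :
    (ShortComplex.kernelSequence p).ShortExact where
  exact := ShortComplex.kernelSequence_exact p
  epi_g := ‹Epi p›

/-- The sequence `0 ⟶ ker f ⟶ ker (f ≫ g) ⟶ ker g`, the start of `kernelCokernelCompSequence`. -/
noncomputable abbrev kernelCompSequence {X Y Z : C} (f : X ⟶ Y) (g : Y ⟶ Z) : ShortComplex C :=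
  ShortComplex.mk (kernel.map f (f ≫ g) (𝟙 _) g (by simp)) (kernel.map (f ≫ g) g f (𝟙 _) (by simp))
    (by ext; simp)

/-- Exactness on the right comes from `coker f = 0`. -/
lemma kernelCompSequence_shortExact {X Y Z : C} (f : X ⟶ Y) (g : Y ⟶ Z) [Epi f] :
    (kernelCompSequence f g).ShortExact := by
  have hlong := kernelCokernelCompSequence_exact f g
  have hmono : Mono ((kernelCokernelCompSequence f g).map' 0 1) := inferInstance
  have hepi : Epi ((kernelCokernelCompSequence f g).map' 1 2) :=
    (hlong.exact 1).epi_f ((isZero_cokernel_of_epi f).eq_of_tgt _ _)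
  exact .mk' (hlong.exact 0) hmono hepi

noncomputable def biproductFinSuccIso {D : Type*} [Category* D] [HasZeroMorphisms D]
    [HasFiniteBiproducts D] [HasBinaryBiproducts D] {n : ℕ} (f : Fin (n + 1) → D) :
    (⨁ f) ≅ f 0 ⊞ ⨁ (fun i : Fin n => f i.succ) :=
  (biproduct.isLimit f).conePointUniqueUpToIso
    (extendFanIsLimit f (biproduct.isLimit _) (BinaryBiproduct.isLimit _ _))

lemma isZero_biproduct_of_isEmpty {D : Type*} [Category* D] [HasZeroMorphisms D] {J : Type*}
    [IsEmpty J] (f : J → D) [HasBiproduct f] : IsZero (⨁ f) :=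
  (IsZero.iff_id_eq_zero _).2 (biproduct.hom_ext _ _ isEmptyElim)

def ClosedUnderKernelsOfEpisOnto (R : C → Prop) (N : C) : Prop :=
  ∀ ⦃M : C⦄ (p : M ⟶ N), Epi p → R M → R (kernel p)

section ClosedUnderKernelsOfEpisOnto

variable {R : C → Prop} (hiso : ∀ ⦃X Y : C⦄, (X ≅ Y) → R X → R Y)
include hiso

lemma ClosedUnderKernelsOfEpisOnto.prop_X₁ {N : C} (hN : ClosedUnderKernelsOfEpisOnto R N)
    {S : ShortComplex C} (hS : S.ShortExact) (e : S.X₃ ≅ N) (h₂ : R S.X₂) : R S.X₁ :=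
  hiso (kernelCompMono S.g e.hom ≪≫
      (hS.fIsKernel.conePointUniqueUpToIso (kernelIsKernel S.g)).symm)
    (hN _ (epi_comp' hS.epi_g inferInstance) h₂)

lemma ClosedUnderKernelsOfEpisOnto.of_iso {N N' : C} (hN : ClosedUnderKernelsOfEpisOnto R N)
    (e : N' ≅ N) : ClosedUnderKernelsOfEpisOnto R N' := fun _ p _ hM =>
  hN.prop_X₁ hiso (ShortComplex.shortExact_kernelSequence p) e hM

lemma closedUnderKernelsOfEpisOnto_of_isZero {N : C} (hN : IsZero N) :
    ClosedUnderKernelsOfEpisOnto R N := fun _ p _ hM =>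
  haveI := kernel.ι_of_zero (hN.eq_of_tgt p 0)
  hiso (asIso (kernel.ι p)).symm hM

lemma ClosedUnderKernelsOfEpisOnto.biprod {A B : C} (hA : ClosedUnderKernelsOfEpisOnto R A)
    (hB : ClosedUnderKernelsOfEpisOnto R B) : ClosedUnderKernelsOfEpisOnto R (A ⊞ B) :=
  fun _ p _ hM =>
  hA.prop_X₁ hiso (kernelCompSequence_shortExact p biprod.snd) kernelBiprodSndIso
    (hB _ (epi_comp _ _) hM)

end ClosedUnderKernelsOfEpisOnto

lemma closedUnderKernelsOfEpisOnto_biproduct {R : C → Prop} (hR : IsAdditiveSubcat R)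
    (hindec : ∀ N, Indecomposable N → R N → ClosedUnderKernelsOfEpisOnto R N) :
    ∀ {n : ℕ} (f : Fin n → C), (∀ i, Indecomposable (f i)) → R (⨁ f) →
      ClosedUnderKernelsOfEpisOnto R (⨁ f)
  | 0, f, _, _ => closedUnderKernelsOfEpisOnto_of_isZero hR.1 (isZero_biproduct_of_isEmpty f)
  | n + 1, f, hf, hRf => by
    obtain ⟨hR₀, hRtail⟩ := hR.2.2 (hR.1 (biproductFinSuccIso f) hRf)
    exact ((hindec _ (hf 0) hR₀).biprod hR.1
      (closedUnderKernelsOfEpisOnto_biproduct hR hindec _ (fun i => hf i.succ) hRtail)).of_iso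
      hR.1 (biproductFinSuccIso f)

theorem closedUnderKernels_iff_restricted_general
    (C : Type u) [Category.{v} C] [Abelian C]
    (hKS : IsKrullSchmidtCat C) (R : C → Prop) (hR : IsAdditiveSubcat R) :
    ClosedUnderKernelsOfEpis R ↔
      (∀ S : ShortComplex C, S.ShortExact → R S.X₂ → R S.X₃ → Indecomposable S.X₃ →
        R S.X₁) := by
  refine ⟨fun hR' S hS h₂ h₃ _ => hR' S hS h₂ h₃, fun hres S hS h₂ h₃ => ?_⟩
  have hindec (N : C) (hN : Indecomposable N) (hRN : R N) : ClosedUnderKernelsOfEpisOnto R N :=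
    fun _ p _ hM => hres _ (ShortComplex.shortExact_kernelSequence p) hM hRN hN
  obtain ⟨n, f, hf, ⟨e⟩⟩ := hKS S.X₃
  exact (closedUnderKernelsOfEpisOnto_biproduct hR hindec f (fun i => (hf i).1)
    (hR.1 e h₃)).prop_X₁ hR.1 hS e h₂

/-- In a Krull–Schmidt abelian category with enough projectives, an additive
subcategory is closed under kernels of epimorphisms if and only if it satisfies the restricted
condition `(R'3)` where the quotient term is an indecomposable object of the subcategory. -/
theorem closedUnderKernels_iff_restricted
    (C : Type u) [Category.{v} C] [Abelian C] [EnoughProjectives C]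
    (hKS : IsKrullSchmidtCat C) (R : C → Prop) (hR : IsAdditiveSubcat R) :
    ClosedUnderKernelsOfEpis R ↔
      (∀ S : ShortComplex C, S.ShortExact → R S.X₂ → R S.X₃ → Indecomposable S.X₃ →
        R S.X₁) :=
  closedUnderKernels_iff_restricted_general C hKS R hR
end

section
/- Let C be a Krull–Schmidt abelian category with enough projectives and let R be an additive full subcategory of C that is closed under kernels of epimorphisms. Then R is closed under extensions (for every short exact sequence 0 → A → E → B → 0 with A, B in R, E is in R) if and only if R satisfies the restricted condition (R'2): for every short exact sequence 0 → X → E → Y → 0 with X and Y indecomposable objects of R, one has E in R. -/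
open CategoryTheory Limits

attribute [local instance] CategoryTheory.Abelian.hasFiniteBiproducts

universe v u

variable {C : Type u} [Category.{v} C] [Abelian C]

section StatementSevenAux

open CategoryTheory.ShortComplex CategoryTheory.Abelian

attribute [local instance] CategoryTheory.Abelian.Pseudoelement.objectToSort
attribute [local instance] CategoryTheory.Abelian.Pseudoelement.homToFun

namespace StatementSevenAux
private lemma key {n : ℕ} (f : Fin (n + 1) → C) :
    (biproduct.lift fun j : Fin n => biproduct.π f j.succ) ≫
      (biproduct.desc fun j : Fin n => biproduct.ι f j.succ)
      = ∑ j : Fin n, biproduct.π f j.succ ≫ biproduct.ι f j.succ := by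
  rw [← Category.id_comp (biproduct.desc fun j : Fin n => biproduct.ι f j.succ),
    ← biproduct.total, Preadditive.sum_comp, Preadditive.comp_sum]
  exact Finset.sum_congr rfl fun j _ => by simp

/-- `⨁ f ≅ f 0 ⊞ ⨁ (tail)` -/
noncomputable def biprodSucc {n : ℕ} (f : Fin (n + 1) → C) :
    (⨁ f) ≅ f 0 ⊞ ⨁ (fun j : Fin n => f j.succ) where
  hom := biprod.lift (biproduct.π f 0) (biproduct.lift fun j => biproduct.π f j.succ)
  inv := biprod.desc (biproduct.ι f 0) (biproduct.desc fun j => biproduct.ι f j.succ)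
  hom_inv_id := by
    apply biproduct.hom_ext'
    intro i
    induction i using Fin.cases with
    | zero =>
        simp only [biprod.lift_desc, Category.comp_id]
        rw [Preadditive.comp_add]
        rw [biproduct.ι_π_self_assoc]
        convert add_zero _ using 2
        rw [key f, Preadditive.comp_sum]
        refine Finset.sum_eq_zero fun j _ => ?_
        rw [biproduct.ι_π_ne_assoc _ (Ne.symm (Fin.succ_ne_zero j)), zero_comp]
    | succ j =>
        simp only [biprod.lift_desc, Category.comp_id]
        rw [Preadditive.comp_add, biproduct.ι_π_ne_assoc _ (Fin.succ_ne_zero j), zero_comp,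
          zero_add, key f, Preadditive.comp_sum]
        rw [Finset.sum_eq_single j]
        · simp
        · intro k _ hk
          rw [biproduct.ι_π_ne_assoc _
            (fun hh => hk ((Fin.succ_injective n) hh).symm), zero_comp]
        · intro hj; exact absurd (Finset.mem_univ j) hj
  inv_hom_id := by
    apply biprod.hom_ext'
    · apply biprod.hom_ext
      · simp
      · simp only [Category.assoc, biprod.lift_snd, biprod.inl_desc_assoc, Category.comp_id,
          biprod.inl_snd]
        apply biproduct.hom_ext; intro k
        simp [biproduct.ι_π_ne _ (Ne.symm (Fin.succ_ne_zero k))]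
    · apply biprod.hom_ext
      · simp only [Category.assoc, biprod.lift_fst, biprod.inr_desc_assoc, Category.comp_id,
          biprod.inr_fst]
        apply biproduct.hom_ext'; intro k
        simp [biproduct.ι_π_ne _ (Fin.succ_ne_zero k)]
      · simp only [Category.assoc, biprod.lift_snd, biprod.inr_desc_assoc, Category.comp_id,
          biprod.inr_snd]
        apply biproduct.hom_ext'; intro k
        apply biproduct.hom_ext; intro l
        by_cases h : k = l
        · subst h; simp
        · simp [biproduct.ι_π_ne _ (fun hh => h (Fin.succ_injective n hh)),
            biproduct.ι_π_ne _ h]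

lemma kernelSES {E Y : C} (p : E ⟶ Y) [Epi p] :
    (ShortComplex.mk (kernel.ι p) p (kernel.condition p)).ShortExact :=
  ShortExact.mk' (ShortComplex.exact_of_f_is_kernel _ (kernelIsKernel p))
    inferInstance inferInstance

lemma cokernelSES {A E : C} (i : A ⟶ E) [Mono i] :
    (ShortComplex.mk i (cokernel.π i) (cokernel.condition i)).ShortExact :=
  ShortExact.mk' (ShortComplex.exact_of_g_is_cokernel _ (cokernelIsCokernel i))
    inferInstance inferInstance

lemma pid {P : C} (a : P) : (𝟙 P : P ⟶ P) a = a := by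
  refine Quotient.inductionOn a fun x => ?_
  rw [Pseudoelement.pseudoApply_mk']
  exact Quotient.sound ⟨x.left, 𝟙 _, 𝟙 _, inferInstance, inferInstance, by simp⟩

lemma sesQuot {S : ShortComplex C} (hS : S.ShortExact) {A₁ A₂ : C}
    (j₁ : A₁ ⟶ S.X₁) (j₂ : A₂ ⟶ S.X₁) (q₁ : S.X₁ ⟶ A₁) (q₂ : S.X₁ ⟶ A₂)
    (hj₁ : j₁ ≫ q₁ = 𝟙 A₁) (hj₂ : j₂ ≫ q₂ = 𝟙 A₂) (h12 : j₁ ≫ q₂ = 0)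
    (htot : q₁ ≫ j₁ + q₂ ≫ j₂ = 𝟙 S.X₁) :
    (ShortComplex.mk (j₂ ≫ S.f ≫ cokernel.π (j₁ ≫ S.f))
      (cokernel.desc (j₁ ≫ S.f) S.g (by rw [Category.assoc, S.zero, comp_zero]))
      (by rw [Category.assoc, Category.assoc, cokernel.π_desc, S.zero, comp_zero])).ShortExact := by
  haveI := hS.mono_f
  haveI := hS.epi_g
  haveI : IsSplitMono j₁ := IsSplitMono.mk' ⟨q₁, hj₁⟩
  haveI hm : Mono (j₁ ≫ S.f) := mono_comp _ _
  set i₁ := j₁ ≫ S.f with hi₁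
  set π := cokernel.π i₁ with hπ
  have hses := cokernelSES i₁
  have hH : q₂ ≫ j₂ ≫ S.f ≫ π = S.f ≫ π := by
    have h0 : j₁ ≫ S.f ≫ π = 0 := by
      rw [← Category.assoc]; exact cokernel.condition i₁
    have h1 := congrArg (fun t => t ≫ (S.f ≫ π)) htot
    simpa [Preadditive.add_comp, Category.assoc, h0] using h1
  refine ShortExact.mk' ?_ ?_ ?_
  · -- exactness
    refine Pseudoelement.exact_of_pseudo_exact _ ?_
    dsimp only
    intro q hq
    obtain ⟨x, hx⟩ := Pseudoelement.pseudo_surjective_of_epi π q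
    have h2 : S.g x = (cokernel.desc i₁ S.g (by rw [hi₁, Category.assoc, S.zero, comp_zero])) (π x) := by
      rw [← Pseudoelement.comp_apply, cokernel.π_desc]
    refine ⟨q₂ ?_, ?_⟩
    · exact Classical.choose (Pseudoelement.pseudo_exact_of_exact hS.exact x
        (by rw [h2, hx]; exact hq))
    have ha := Classical.choose_spec (Pseudoelement.pseudo_exact_of_exact hS.exact x
        (by rw [h2, hx]; exact hq))
    show (j₂ ≫ S.f ≫ π) (q₂ _) = q
    rw [← Pseudoelement.comp_apply, hH, Pseudoelement.comp_apply, ha, hx]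
  · -- mono
    dsimp only
    apply Pseudoelement.mono_of_zero_of_map_zero
    intro a ha
    rw [show j₂ ≫ S.f ≫ π = (j₂ ≫ S.f) ≫ π from (Category.assoc _ _ _).symm,
      Pseudoelement.comp_apply] at ha
    obtain ⟨a₁, ha₁⟩ := Pseudoelement.pseudo_exact_of_exact hses.exact _ ha
    have h2 : S.f (j₁ a₁) = S.f (j₂ a) := by
      rw [← Pseudoelement.comp_apply, ← Pseudoelement.comp_apply]; exact ha₁
    have h3 : j₁ a₁ = j₂ a := Pseudoelement.pseudo_injective_of_mono S.f h2
    have h4 : a = q₂ (j₂ a) := by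
      rw [← Pseudoelement.comp_apply, hj₂, pid]
    rw [h4, ← h3, ← Pseudoelement.comp_apply, h12, Pseudoelement.zero_apply]
  · -- epi
    haveI : Epi (π ≫ cokernel.desc i₁ S.g (by rw [hi₁, Category.assoc, S.zero, comp_zero])) := by
      rw [cokernel.π_desc]; infer_instance
    exact epi_of_epi π _

lemma sesKer {S : ShortComplex C} (hS : S.ShortExact) {B₁ B₂ : C}
    (k₁ : B₁ ⟶ S.X₃) (k₂ : B₂ ⟶ S.X₃) (p₁ : S.X₃ ⟶ B₁) (p₂ : S.X₃ ⟶ B₂)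
    (hk₁ : k₁ ≫ p₁ = 𝟙 B₁) (hk₂ : k₂ ≫ p₂ = 𝟙 B₂) (h12 : k₁ ≫ p₂ = 0)
    (htot : p₁ ≫ k₁ + p₂ ≫ k₂ = 𝟙 S.X₃) :
    (ShortComplex.mk
      (kernel.lift (S.g ≫ p₂) S.f (by rw [← Category.assoc, S.zero, zero_comp]))
      (kernel.ι (S.g ≫ p₂) ≫ S.g ≫ p₁)
      (by rw [kernel.lift_ι_assoc, ← Category.assoc, S.zero, zero_comp])).ShortExact := by
  haveI := hS.mono_f
  haveI := hS.epi_g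
  haveI : IsSplitEpi p₂ := IsSplitEpi.mk' ⟨k₂, hk₂⟩
  haveI hep : Epi (S.g ≫ p₂) := epi_comp _ _
  set w := S.g ≫ p₂ with hw
  set ι := kernel.ι w with hι
  have hker := kernelSES w
  have hsplit : (ShortComplex.mk k₁ p₂ h12).ShortExact :=
    Splitting.shortExact { r := p₁, s := k₂, f_r := hk₁, s_g := hk₂, id := htot }
  refine ShortExact.mk' ?_ ?_ ?_
  · refine Pseudoelement.exact_of_pseudo_exact _ ?_
    dsimp only
    intro x' hx'
    have e1 : p₂ (S.g (ι x')) = 0 := by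
      rw [← Pseudoelement.comp_apply, ← Pseudoelement.comp_apply, ← hw, kernel.condition,
        Pseudoelement.zero_apply]
    have e2 : p₁ (S.g (ι x')) = 0 := by
      rw [← Pseudoelement.comp_apply, ← Pseudoelement.comp_apply]; exact hx'
    obtain ⟨bb, hbb⟩ := Pseudoelement.pseudo_exact_of_exact hsplit.exact _ e1
    have hbb0 : bb = 0 := by
      have h5 : bb = p₁ (k₁ bb) := by rw [← Pseudoelement.comp_apply, hk₁, pid]
      rw [h5, hbb]; exact e2
    have hg0 : S.g (ι x') = 0 := by rw [← hbb, hbb0, Pseudoelement.apply_zero]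
    obtain ⟨a, ha⟩ := Pseudoelement.pseudo_exact_of_exact hS.exact _ hg0
    refine ⟨a, ?_⟩
    apply Pseudoelement.pseudo_injective_of_mono ι
    rw [← Pseudoelement.comp_apply, kernel.lift_ι]
    exact ha
  · dsimp only
    have hmm : Mono (kernel.lift w S.f (by rw [← Category.assoc, S.zero, zero_comp]) ≫ ι) := by
      rw [kernel.lift_ι]; exact hS.mono_f
    exact mono_of_mono _ ι
  · refine Pseudoelement.epi_of_pseudo_surjective _ ?_
    intro b₁
    obtain ⟨x, hx⟩ := Pseudoelement.pseudo_surjective_of_epi S.g (k₁ b₁)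
    have hx2 : w x = 0 := by
      rw [hw, Pseudoelement.comp_apply, hx, ← Pseudoelement.comp_apply, h12,
        Pseudoelement.zero_apply]
    obtain ⟨x', hx'⟩ := Pseudoelement.pseudo_exact_of_exact hker.exact _ hx2
    refine ⟨x', ?_⟩
    show (ι ≫ S.g ≫ p₁) x' = b₁
    rw [Pseudoelement.comp_apply, Pseudoelement.comp_apply, hx', hx,
      ← Pseudoelement.comp_apply, hk₁, pid]

/-- Mayer–Vietoris short exact sequence `E → E/A₁ ⊞ E/A₂ → B`. -/
lemma sesMV {S : ShortComplex C} (hS : S.ShortExact) {A₁ A₂ : C}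
    (j₁ : A₁ ⟶ S.X₁) (j₂ : A₂ ⟶ S.X₁) (q₁ : S.X₁ ⟶ A₁) (q₂ : S.X₁ ⟶ A₂)
    (hj₁ : j₁ ≫ q₁ = 𝟙 A₁) (hj₂ : j₂ ≫ q₂ = 𝟙 A₂) (h21 : j₂ ≫ q₁ = 0)
    (htot : q₁ ≫ j₁ + q₂ ≫ j₂ = 𝟙 S.X₁) :
    (ShortComplex.mk
      (biprod.lift (cokernel.π (j₁ ≫ S.f)) (-(cokernel.π (j₂ ≫ S.f))))
      (biprod.desc (cokernel.desc (j₁ ≫ S.f) S.g (by rw [Category.assoc, S.zero, comp_zero]))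
        (cokernel.desc (j₂ ≫ S.f) S.g (by rw [Category.assoc, S.zero, comp_zero])))
      (by rw [biprod.lift_desc, cokernel.π_desc, Preadditive.neg_comp, cokernel.π_desc,
        add_neg_cancel])).ShortExact := by
  haveI := hS.mono_f
  haveI := hS.epi_g
  haveI : IsSplitMono j₁ := IsSplitMono.mk' ⟨q₁, hj₁⟩
  haveI : IsSplitMono j₂ := IsSplitMono.mk' ⟨q₂, hj₂⟩
  haveI hm₁ : Mono (j₁ ≫ S.f) := mono_comp _ _
  haveI hm₂ : Mono (j₂ ≫ S.f) := mono_comp _ _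
  set i₁ := j₁ ≫ S.f with hi₁
  set i₂ := j₂ ≫ S.f with hi₂
  set π₁ := cokernel.π i₁ with hπ₁
  set π₂ := cokernel.π i₂ with hπ₂
  set ψ₁ := cokernel.desc i₁ S.g (by rw [hi₁, Category.assoc, S.zero, comp_zero]) with hψ₁
  set ψ₂ := cokernel.desc i₂ S.g (by rw [hi₂, Category.assoc, S.zero, comp_zero]) with hψ₂
  have hu0 : biprod.lift π₁ (-π₂) ≫ biprod.desc ψ₁ ψ₂ = 0 := by
    rw [biprod.lift_desc, hψ₁, hψ₂, cokernel.π_desc, Preadditive.neg_comp, cokernel.π_desc,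
      add_neg_cancel]
  haveI h2 : Epi ψ₁ := by
    haveI h1 : Epi (π₁ ≫ ψ₁) := by rw [hψ₁, hπ₁, cokernel.π_desc]; exact hS.epi_g
    exact epi_of_epi π₁ ψ₁
  haveI hepi : Epi (biprod.desc ψ₁ ψ₂) := by
    haveI h3 : Epi (biprod.inl ≫ biprod.desc ψ₁ ψ₂) := by rw [biprod.inl_desc]; exact h2
    exact epi_of_epi biprod.inl _
  have hfdec : S.f = q₁ ≫ i₁ + q₂ ≫ i₂ := by
    rw [hi₁, hi₂, ← Category.assoc, ← Category.assoc, ← Preadditive.add_comp, htot,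
      Category.id_comp]
  have hcolim : IsColimit (CokernelCofork.ofπ (biprod.desc ψ₁ ψ₂) hu0) := by
    refine CokernelCofork.IsColimit.ofπ' _ _ ?_
    intro T t ht
    have hexp : biprod.lift π₁ (-π₂) ≫ t
        = π₁ ≫ biprod.inl ≫ t + (-π₂) ≫ biprod.inr ≫ t := by
      rw [biprod.lift_eq, Preadditive.add_comp, Category.assoc, Category.assoc]
    rw [hexp] at ht
    have hk2 : π₁ ≫ biprod.inl ≫ t = π₂ ≫ biprod.inr ≫ t := by
      rw [Preadditive.neg_comp] at ht
      rw [← sub_eq_zero]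
      rw [sub_eq_add_neg]
      exact ht
    set t₁ := biprod.inl ≫ t with ht₁
    set t₂ := biprod.inr ≫ t with ht₂
    set k := π₁ ≫ t₁ with hkdef
    have e1 : i₁ ≫ k = 0 := by
      rw [hkdef, ← Category.assoc, hπ₁, cokernel.condition, zero_comp]
    have e2 : i₂ ≫ k = 0 := by
      rw [hk2, ← Category.assoc, hπ₂, cokernel.condition, zero_comp]
    have hfk : S.f ≫ k = 0 := by
      rw [hfdec, Preadditive.add_comp, Category.assoc q₁ i₁ k, Category.assoc q₂ i₂ k, e1, e2,
        comp_zero, comp_zero, add_zero]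
    obtain ⟨d, hd⟩ := CokernelCofork.IsColimit.desc' hS.gIsCokernel k hfk
    have hd' : S.g ≫ d = k := hd
    refine ⟨d, ?_⟩
    apply biprod.hom_ext'
    · rw [biprod.inl_desc_assoc, ← cancel_epi π₁, ← Category.assoc, hψ₁, hπ₁, cokernel.π_desc]
      exact hd'
    · rw [biprod.inr_desc_assoc, ← cancel_epi π₂, ← Category.assoc, hψ₂, hπ₂, cokernel.π_desc]
      rw [hd']
      exact hk2
  have h7 : Mono (i₁ ≫ π₂) := by
    apply Preadditive.mono_of_cancel_zero
    intro T m hm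
    have hklim₂ := Abelian.monoIsKernelOfCokernel _ (cokernelIsCokernel i₂)
    obtain ⟨m', hm'⟩ := KernelFork.IsLimit.lift' hklim₂ (m ≫ i₁)
      (by show (m ≫ i₁) ≫ cokernel.π i₂ = 0; rw [Category.assoc]; exact hm)
    have hm'' : m' ≫ i₂ = m ≫ i₁ := hm'
    have h8 : m' ≫ j₂ = m ≫ j₁ := by
      refine (cancel_mono S.f).1 ?_
      calc (m' ≫ j₂) ≫ S.f = m' ≫ i₂ := by rw [Category.assoc]
      _ = m ≫ i₁ := hm''
      _ = (m ≫ j₁) ≫ S.f := by rw [Category.assoc]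
    calc m = (m ≫ j₁) ≫ q₁ := by rw [Category.assoc, hj₁, Category.comp_id]
    _ = (m' ≫ j₂) ≫ q₁ := by rw [h8]
    _ = 0 := by rw [Category.assoc, h21, comp_zero]
  haveI hmono : Mono (biprod.lift π₁ (-π₂)) := by
    apply Preadditive.mono_of_cancel_zero
    intro T l hl
    have hl1 : l ≫ π₁ = 0 := by
      have := congrArg (fun z => z ≫ (biprod.fst : cokernel i₁ ⊞ cokernel i₂ ⟶ _)) hl
      simpa using this
    have hl2 : l ≫ π₂ = 0 := by
      have := congrArg (fun z => z ≫ (biprod.snd : cokernel i₁ ⊞ cokernel i₂ ⟶ _)) hl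
      simp only [Category.assoc, biprod.lift_snd, zero_comp] at this
      rw [Preadditive.comp_neg, neg_eq_zero] at this
      exact this
    have hklim := Abelian.monoIsKernelOfCokernel _ (cokernelIsCokernel i₁)
    obtain ⟨l', hl'⟩ := KernelFork.IsLimit.lift' hklim l hl1
    have hl'' : l' ≫ i₁ = l := hl'
    have h6 : l' ≫ (i₁ ≫ π₂) = 0 := by rw [← Category.assoc, hl'', hl2]
    have h9 : l' = 0 := (cancel_mono (i₁ ≫ π₂)).1 (by rw [h6, zero_comp])
    rw [← hl'', h9, zero_comp]
  exact ShortExact.mk' (ShortComplex.exact_of_g_is_cokernel _ hcolim) hmono hepi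


section Glue
variable {R : C → Prop}

lemma isZeroFin0 (f : Fin 0 → C) : IsZero (⨁ f) := by
  rw [IsZero.iff_id_eq_zero]
  apply biproduct.hom_ext
  intro j
  exact j.elim0

noncomputable def biprodFinOne (f : Fin 1 → C) : (⨁ f) ≅ f 0 :=
  biprodSucc f ≪≫ (isoBiprodZero (isZeroFin0 _)).symm

lemma ses_transport {S : ShortComplex C} (hS : S.ShortExact) {A B : C}
    (e₁ : A ≅ S.X₁) (e₃ : S.X₃ ≅ B) :
    (ShortComplex.mk (e₁.hom ≫ S.f) (S.g ≫ e₃.hom)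
      (by rw [Category.assoc, ← Category.assoc S.f, S.zero, zero_comp, comp_zero])).ShortExact := by
  refine ShortComplex.shortExact_of_iso ?_ hS
  exact ShortComplex.isoMk e₁.symm (Iso.refl _) e₃ (by simp) (by simp)

lemma indec_of_iso {X Y : C} (e : X ≅ Y) (h : Indecomposable X) : Indecomposable Y :=
  ⟨fun hz => h.1 (hz.of_iso e), fun Y' Z' eYZ => h.2 Y' Z' (e ≪≫ eYZ)⟩

lemma R_iso (hR : (∀ ⦃X Y : C⦄, (X ≅ Y) → R X → R Y) ∧
      (∀ ⦃X Y : C⦄, R X → R Y → R (X ⊞ Y)) ∧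
      (∀ ⦃X Y : C⦄, R (X ⊞ Y) → R X ∧ R Y))
    {X Y : C} (e : X ≅ Y) (h : R X) : R Y := hR.1 e h

lemma R_zero (hR : (∀ ⦃X Y : C⦄, (X ≅ Y) → R X → R Y) ∧
      (∀ ⦃X Y : C⦄, R X → R Y → R (X ⊞ Y)) ∧
      (∀ ⦃X Y : C⦄, R (X ⊞ Y) → R X ∧ R Y))
    {X Z : C} (hX : R X) (hZ : IsZero Z) : R Z :=
  (hR.2.2 (hR.1 (isoBiprodZero hZ) hX)).2

lemma R_biprod_fin (hR : (∀ ⦃X Y : C⦄, (X ≅ Y) → R X → R Y) ∧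
      (∀ ⦃X Y : C⦄, R X → R Y → R (X ⊞ Y)) ∧
      (∀ ⦃X Y : C⦄, R (X ⊞ Y) → R X ∧ R Y))
    {n : ℕ} (f : Fin n → C) (hf : ∀ i, R (f i)) {W : C} (hW : R W) : R (⨁ f) := by
  induction n with
  | zero => exact R_zero hR hW (isZeroFin0 f)
  | succ n ihn =>
      refine hR.1 (biprodSucc f).symm ?_
      exact hR.2.1 (hf 0) (ihn (fun j : Fin n => f j.succ) (fun j => hf j.succ))

lemma R_pieces (hR : (∀ ⦃X Y : C⦄, (X ≅ Y) → R X → R Y) ∧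
      (∀ ⦃X Y : C⦄, R X → R Y → R (X ⊞ Y)) ∧
      (∀ ⦃X Y : C⦄, R (X ⊞ Y) → R X ∧ R Y))
    {n : ℕ} (f : Fin n → C) {X : C} (hX : R X) (e : X ≅ ⨁ f) : ∀ i, R (f i) := by
  induction n generalizing X with
  | zero => exact fun i => i.elim0
  | succ n ihn =>
      have h1 : R (f 0 ⊞ ⨁ fun j : Fin n => f j.succ) := hR.1 (e ≪≫ biprodSucc f) hX
      intro i
      induction i using Fin.cases with
      | zero => exact (hR.2.2 h1).1
      | succ j =>
          exact ihn (fun j : Fin n => f j.succ) (hR.2.2 h1).2 (Iso.refl _) j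

variable (R)

lemma inner_induction
    (hR : (∀ ⦃X Y : C⦄, (X ≅ Y) → R X → R Y) ∧
      (∀ ⦃X Y : C⦄, R X → R Y → R (X ⊞ Y)) ∧
      (∀ ⦃X Y : C⦄, R (X ⊞ Y) → R X ∧ R Y))
    (hker : ∀ S : ShortComplex C, S.ShortExact → R S.X₂ → R S.X₃ → R S.X₁)
    (hres : ∀ S : ShortComplex C, S.ShortExact →
      R S.X₁ → Indecomposable S.X₁ → R S.X₃ → Indecomposable S.X₃ → R S.X₂) :
    ∀ n : ℕ, ∀ S : ShortComplex C, S.ShortExact → R S.X₃ → Indecomposable S.X₃ →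
      ∀ f : Fin n → C, (∀ i, Indecomposable (f i)) → (∀ i, R (f i)) →
      (S.X₁ ≅ ⨁ f) → R S.X₂ := by
  intro n
  induction n using Nat.strong_induction_on with
  | _ n ih =>
    intro S hS hX₃R hX₃I f hfI hfR e
    match n, f, hfI, hfR, e, ih with
    | 0, f, hfI, hfR, e, ih =>
        have hz : IsZero S.X₁ := IsZero.of_iso (isZeroFin0 f) e
        have hf0 : S.f = 0 := hz.eq_of_src S.f 0
        haveI := hS.epi_g
        haveI : Mono S.g := hS.exact.mono_g hf0
        haveI : IsIso S.g := isIso_of_mono_of_epi _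
        exact hR.1 (asIso S.g).symm hX₃R
    | 1, f, hfI, hfR, e, ih =>
        have hts := ses_transport hS (e ≪≫ biprodFinOne f).symm (Iso.refl S.X₃)
        have h2 := hres _ hts (hfR 0) (hfI 0) hX₃R hX₃I
        exact h2
    | (m+2), f, hfI, hfR, e, ih =>
        have e2 : S.X₁ ≅ f 0 ⊞ (⨁ fun j : Fin (m+1) => f j.succ) := e ≪≫ biprodSucc f
        have h11 : (biprod.inl ≫ e2.inv) ≫ (e2.hom ≫ biprod.fst) = 𝟙 (f 0) := by simp
        have h22 : (biprod.inr ≫ e2.inv) ≫ (e2.hom ≫ biprod.snd) = 𝟙 _ := by simp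
        have h12 : (biprod.inl ≫ e2.inv) ≫ (e2.hom ≫ biprod.snd) = 0 := by simp
        have h21 : (biprod.inr ≫ e2.inv) ≫ (e2.hom ≫ biprod.fst) = 0 := by simp
        have htot : (e2.hom ≫ biprod.fst) ≫ (biprod.inl ≫ e2.inv)
            + (e2.hom ≫ biprod.snd) ≫ (biprod.inr ≫ e2.inv) = 𝟙 S.X₁ := by
          have hexp : (e2.hom ≫ biprod.fst) ≫ (biprod.inl ≫ e2.inv)
              + (e2.hom ≫ biprod.snd) ≫ (biprod.inr ≫ e2.inv)
              = e2.hom ≫ (biprod.fst ≫ biprod.inl + biprod.snd ≫ biprod.inr) ≫ e2.inv := by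
            rw [Preadditive.add_comp, Preadditive.comp_add]
            simp only [Category.assoc]
          rw [hexp, biprod.total]
          simp
        have SQ1 := sesQuot hS _ _ _ _ h11 h22 h12 htot
        have RQ1 : R (cokernel ((biprod.inl ≫ e2.inv) ≫ S.f)) :=
          ih (m+1) (by omega) _ SQ1 hX₃R hX₃I (fun j => f j.succ) (fun j => hfI j.succ)
            (fun j => hfR j.succ) (Iso.refl _)
        have htot' : (e2.hom ≫ biprod.snd) ≫ (biprod.inr ≫ e2.inv)
            + (e2.hom ≫ biprod.fst) ≫ (biprod.inl ≫ e2.inv) = 𝟙 S.X₁ := by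
          rw [add_comm]; exact htot
        have SQ2 := sesQuot hS _ _ _ _ h22 h11 h21 htot'
        have ef : (f 0 : C) ≅ ⨁ (fun _ : Fin 1 => f 0) := (biprodFinOne (fun _ : Fin 1 => _)).symm
        have RQ2 : R (cokernel ((biprod.inr ≫ e2.inv) ≫ S.f)) := by
          have h2 := ih 1 (by omega) _ SQ2 hX₃R hX₃I (fun _ : Fin 1 => f 0) (fun _ => hfI 0)
            (fun _ => hfR 0) ef
          exact h2
        have SMV := sesMV hS _ _ _ _ h11 h22 h21 htot
        exact hker _ SMV (hR.2.1 RQ1 RQ2) hX₃R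

lemma outer_induction
    (hR : (∀ ⦃X Y : C⦄, (X ≅ Y) → R X → R Y) ∧
      (∀ ⦃X Y : C⦄, R X → R Y → R (X ⊞ Y)) ∧
      (∀ ⦃X Y : C⦄, R (X ⊞ Y) → R X ∧ R Y))
    (hker : ∀ S : ShortComplex C, S.ShortExact → R S.X₂ → R S.X₃ → R S.X₁)
    (hres : ∀ S : ShortComplex C, S.ShortExact →
      R S.X₁ → Indecomposable S.X₁ → R S.X₃ → Indecomposable S.X₃ → R S.X₂)
    (hKS : ∀ X : C, ∃ (n : ℕ) (f : Fin n → C),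
      (∀ i, Indecomposable (f i) ∧ IsLocalRing (End (f i))) ∧ Nonempty (X ≅ ⨁ f)) :
    ∀ m : ℕ, ∀ S : ShortComplex C, S.ShortExact → R S.X₁ →
      ∀ g : Fin m → C, (∀ i, Indecomposable (g i)) → (∀ i, R (g i)) →
      (S.X₃ ≅ ⨁ g) → R S.X₂ := by
  intro m
  induction m using Nat.strong_induction_on with
  | _ m ih =>
    intro S hS hX₁R g hgI hgR e
    match m, g, hgI, hgR, e, ih with
    | 0, g, hgI, hgR, e, ih =>
        have hz : IsZero S.X₃ := IsZero.of_iso (isZeroFin0 g) e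
        have hg0 : S.g = 0 := hz.eq_of_tgt S.g 0
        haveI := hS.mono_f
        haveI : Epi S.f := hS.exact.epi_f hg0
        haveI : IsIso S.f := isIso_of_mono_of_epi _
        exact hR.1 (asIso S.f) hX₁R
    | 1, g, hgI, hgR, e, ih =>
        obtain ⟨nn, f, hf, ⟨eX⟩⟩ := hKS S.X₁
        have hX₃R : R S.X₃ := hR.1 e.symm (R_biprod_fin hR g hgR hX₁R)
        have hX₃I : Indecomposable S.X₃ := indec_of_iso (e ≪≫ biprodFinOne g).symm (hgI 0)
        exact inner_induction R hR hker hres nn S hS hX₃R hX₃I f (fun i => (hf i).1)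
          (R_pieces hR f hX₁R eX) eX
    | (k+2), g, hgI, hgR, e, ih =>
        have e3 : S.X₃ ≅ g 0 ⊞ (⨁ fun j : Fin (k+1) => g j.succ) := e ≪≫ biprodSucc g
        have h11 : (biprod.inl ≫ e3.inv) ≫ (e3.hom ≫ biprod.fst) = 𝟙 (g 0) := by simp
        have h22 : (biprod.inr ≫ e3.inv) ≫ (e3.hom ≫ biprod.snd) = 𝟙 _ := by simp
        have h12 : (biprod.inl ≫ e3.inv) ≫ (e3.hom ≫ biprod.snd) = 0 := by simp
        have htot : (e3.hom ≫ biprod.fst) ≫ (biprod.inl ≫ e3.inv)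
            + (e3.hom ≫ biprod.snd) ≫ (biprod.inr ≫ e3.inv) = 𝟙 S.X₃ := by
          have hexp : (e3.hom ≫ biprod.fst) ≫ (biprod.inl ≫ e3.inv)
              + (e3.hom ≫ biprod.snd) ≫ (biprod.inr ≫ e3.inv)
              = e3.hom ≫ (biprod.fst ≫ biprod.inl + biprod.snd ≫ biprod.inr) ≫ e3.inv := by
            rw [Preadditive.add_comp, Preadditive.comp_add]
            simp only [Category.assoc]
          rw [hexp, biprod.total]
          simp
        have SKer := sesKer hS _ _ _ _ h11 h22 h12 htot
        have eg : (g 0 : C) ≅ ⨁ (fun _ : Fin 1 => g 0) := (biprodFinOne (fun _ : Fin 1 => _)).symm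
        have RE₁ : R (kernel (S.g ≫ e3.hom ≫ biprod.snd)) := by
          have h2 := ih 1 (by omega) _ SKer hX₁R (fun _ : Fin 1 => g 0) (fun _ => hgI 0)
            (fun _ => hgR 0) eg
          exact h2
        haveI := hS.epi_g
        haveI : IsSplitEpi (e3.hom ≫ biprod.snd) :=
          IsSplitEpi.mk' ⟨biprod.inr ≫ e3.inv, h22⟩
        haveI : Epi (S.g ≫ e3.hom ≫ biprod.snd) := epi_comp _ _
        have Sb := kernelSES (S.g ≫ e3.hom ≫ biprod.snd)
        have h3 := ih (k+1) (by omega) _ Sb RE₁ (fun j => g j.succ) (fun j => hgI j.succ)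
          (fun j => hgR j.succ) (Iso.refl _)
        exact h3

end Glue
end StatementSevenAux

end StatementSevenAux

/-- In a Krull–Schmidt abelian category with enough projectives, an additive
subcategory closed under kernels of epimorphisms is closed under extensions if and only if it
satisfies the restricted condition `(R'2)` where the two outer terms are indecomposable
objects of the subcategory. -/
theorem closedUnderExtensions_iff_restricted
    (C : Type u) [Category.{v} C] [Abelian C] [EnoughProjectives C]
    (hKS : IsKrullSchmidtCat C) (R : C → Prop) (hR : IsAdditiveSubcat R)
    (hker : ClosedUnderKernelsOfEpis R) :
    ClosedUnderExtensions R ↔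
      (∀ S : ShortComplex C, S.ShortExact →
        R S.X₁ → Indecomposable S.X₁ → R S.X₃ → Indecomposable S.X₃ → R S.X₂) := by
  constructor
  · intro hext S hSE h1 _ h3 _
    exact hext S hSE h1 h3
  · intro hres S hSE hA hB
    obtain ⟨mB, gB, hgB, ⟨eB⟩⟩ := hKS S.X₃
    have h2 := StatementSevenAux.outer_induction R hR hker hres hKS mB S hSE hA gB
      (fun i => (hgB i).1) (StatementSevenAux.R_pieces hR gB hB eB) eB
    exact h2
end

section
/- Let C be a Krull–Schmidt abelian category with enough projectives satisfying condition (Mid)_{p0} for some positive integer p0. Let R be an additive full subcategory of C that is closed under extensions. Then the following are equivalent: (i) for every short exact sequence 0 → K → M → Y → 0 with M in R and Y an indecomposable object of R, one has K in R; (ii) for every short exact sequence 0 → K → M̃ → Y → 0 with Y an indecomposable object of R and M̃ an object of R admitting at most p0 indecomposable direct summands, one has K in R. -/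
open CategoryTheory Limits

attribute [local instance] CategoryTheory.Abelian.hasFiniteBiproducts

universe v u

variable {C : Type u} [Category.{v} C] [Abelian C]

section AuxiliaryLemmas

open CategoryTheory.Abelian

attribute [local instance] Pseudoelement.objectToSort Pseudoelement.homToFun

private lemma pseudo_id_apply {P : C} (a : P) : (𝟙 P : P ⟶ P) a = a := by
  refine Quotient.inductionOn a fun x => ?_
  rw [Pseudoelement.pseudoApply_mk']
  exact Quotient.sound ⟨x.left, 𝟙 _, 𝟙 _, inferInstance, inferInstance, by simp⟩

variable {K A B M Y : C}

private lemma side_shortExact (ia : A ⟶ K) (ib : B ⟶ K) (pa : K ⟶ A)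
    (h1 : ia ≫ pa = 𝟙 A) (h4 : ib ≫ pa = 0)
    (pb : K ⟶ B) (h5 : pa ≫ ia + pb ≫ ib = 𝟙 K)
    (f : K ⟶ M) (g : M ⟶ Y) (w : f ≫ g = 0)
    (hse : (ShortComplex.mk f g w).ShortExact) :
    (ShortComplex.mk (ia ≫ f ≫ cokernel.π (ib ≫ f))
      (cokernel.desc (ib ≫ f) g (by rw [Category.assoc, w, comp_zero]))
      (by simp [w])).ShortExact := by
  haveI : Mono f := hse.mono_f
  haveI : Epi g := hse.epi_g
  have pexS := Pseudoelement.pseudo_exact_of_exact (S := ShortComplex.mk f g w) hse.exact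
  have hexB : (ShortComplex.mk (ib ≫ f) (cokernel.π (ib ≫ f)) (cokernel.condition _)).Exact :=
    ShortComplex.exact_of_g_is_cokernel _ (cokernelIsCokernel _)
  have pexB := Pseudoelement.pseudo_exact_of_exact hexB
  have keyid : f ≫ cokernel.π (ib ≫ f) = pa ≫ (ia ≫ f ≫ cokernel.π (ib ≫ f)) := by
    calc f ≫ cokernel.π (ib ≫ f) = 𝟙 K ≫ f ≫ cokernel.π (ib ≫ f) := by rw [Category.id_comp]
    _ = (pa ≫ ia + pb ≫ ib) ≫ f ≫ cokernel.π (ib ≫ f) := by rw [h5]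
    _ = pa ≫ (ia ≫ f ≫ cokernel.π (ib ≫ f))
          + pb ≫ ((ib ≫ f) ≫ cokernel.π (ib ≫ f)) := by
        simp only [Preadditive.add_comp, Category.assoc]
    _ = pa ≫ (ia ≫ f ≫ cokernel.π (ib ≫ f)) := by
        rw [cokernel.condition]; simp
  refine ShortComplex.ShortExact.mk' ?_ ?_ ?_
  · -- exactness
    apply Pseudoelement.exact_of_pseudo_exact
    intro e he
    obtain ⟨m, hm⟩ := Pseudoelement.pseudo_surjective_of_epi (cokernel.π (ib ≫ f)) e
    have hg : g m = 0 := by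
      have h := cokernel.π_desc (ib ≫ f) g (by rw [Category.assoc, w, comp_zero])
      rw [← h, Pseudoelement.comp_apply, hm, he]
    obtain ⟨k, hk⟩ := pexS m hg
    refine ⟨pa k, ?_⟩
    rw [← Pseudoelement.comp_apply, ← keyid, Pseudoelement.comp_apply, hk, hm]
  · -- mono
    apply Pseudoelement.mono_of_zero_of_map_zero
    intro a ha
    rw [Pseudoelement.comp_apply, Pseudoelement.comp_apply] at ha
    obtain ⟨b, hb⟩ := pexB _ ha
    rw [Pseudoelement.comp_apply] at hb
    have hba := Pseudoelement.pseudo_injective_of_mono f hb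
    have := congrArg (fun t => (pa : K ⟶ A) t) hba
    simp only at this
    rw [← Pseudoelement.comp_apply, ← Pseudoelement.comp_apply, h1, h4,
      pseudo_id_apply, Pseudoelement.zero_apply] at this
    exact this.symm
  · -- epi
    exact epi_of_epi_fac (cokernel.π_desc (ib ≫ f) g _)

private lemma middle_shortExact (ia : A ⟶ K) (ib : B ⟶ K) (pa : K ⟶ A) (pb : K ⟶ B)
    (h1 : ia ≫ pa = 𝟙 A) (h2 : ib ≫ pb = 𝟙 B) (h3 : ia ≫ pb = 0) (h4 : ib ≫ pa = 0)
    (h5 : pa ≫ ia + pb ≫ ib = 𝟙 K)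
    (f : K ⟶ M) (g : M ⟶ Y) (w : f ≫ g = 0)
    (hse : (ShortComplex.mk f g w).ShortExact)
    (monoA : Mono (ia ≫ f ≫ cokernel.π (ib ≫ f)))
    (monoB : Mono (ib ≫ f ≫ cokernel.π (ia ≫ f)))
    (pexA : ∀ e, (cokernel.desc (ib ≫ f) g (by rw [Category.assoc, w, comp_zero])) e = 0 →
        ∃ a, (ia ≫ f ≫ cokernel.π (ib ≫ f)) a = e) :
    (ShortComplex.mk
      (biprod.lift (cokernel.π (ib ≫ f)) (cokernel.π (ia ≫ f)))
      (biprod.desc (cokernel.desc (ib ≫ f) g (by rw [Category.assoc, w, comp_zero]))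
        (-(cokernel.desc (ia ≫ f) g (by rw [Category.assoc, w, comp_zero]))))
      (by simp)).ShortExact := by
  haveI : Mono f := hse.mono_f
  haveI : Epi g := hse.epi_g
  set vA := cokernel.π (ib ≫ f) with hvA
  set vB := cokernel.π (ia ≫ f) with hvB
  set pA := cokernel.desc (ib ≫ f) g (by rw [Category.assoc, w, comp_zero]) with hpA
  set pB := cokernel.desc (ia ≫ f) g (by rw [Category.assoc, w, comp_zero]) with hpB
  set L := biprod.lift vA vB with hL
  set d := biprod.desc pA (-pB) with hd
  have hzero : L ≫ d = 0 := by
    simp only [hL, hd, hvA, hvB, hpA, hpB, biprod.lift_desc, cokernel.π_desc]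
    simp
  -- exactness of (ib ≫ f, vA)
  have hexB : (ShortComplex.mk (ib ≫ f) vA (cokernel.condition _)).Exact :=
    ShortComplex.exact_of_g_is_cokernel _ (cokernelIsCokernel _)
  have pexB := Pseudoelement.pseudo_exact_of_exact hexB
  -- exactness of (L, cokernel.π L)
  have hexQ : (ShortComplex.mk L (cokernel.π L) (cokernel.condition _)).Exact :=
    ShortComplex.exact_of_g_is_cokernel _ (cokernelIsCokernel _)
  have pexQ := Pseudoelement.pseudo_exact_of_exact hexQ
  -- exactness of (inl, snd)
  set inlP : cokernel (ib ≫ f) ⟶ cokernel (ib ≫ f) ⊞ cokernel (ia ≫ f) := biprod.inl with hinlP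
  set sndP : cokernel (ib ≫ f) ⊞ cokernel (ia ≫ f) ⟶ cokernel (ia ≫ f) := biprod.snd with hsndP
  have hexIS : (ShortComplex.mk inlP sndP (by simp [hinlP, hsndP])).Exact := by
    apply ShortComplex.Splitting.exact
    exact { r := biprod.fst, s := biprod.inr, f_r := by simp [hinlP], s_g := by simp [hsndP],
            id := by simp only [hinlP, hsndP]; simpa using biprod.total }
  have pexIS := Pseudoelement.pseudo_exact_of_exact hexIS
  -- key identity
  have id2 : (ia ≫ f) ≫ L = (ia ≫ f ≫ vA) ≫ inlP := by
    apply biprod.hom_ext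
    · simp [hL, hinlP]
    · simp only [hL, hinlP, Category.assoc, biprod.lift_snd, biprod.inl_snd, comp_zero]
      rw [← Category.assoc, hvB, cokernel.condition]
  refine ShortComplex.ShortExact.mk' ?_ ?_ ?_
  · -- exact
    apply Pseudoelement.exact_of_pseudo_exact
    intro x hx
    obtain ⟨m, hm⟩ := Pseudoelement.pseudo_surjective_of_epi vB ((sndP) x)
    have hsnd : (sndP) ((L) m) = (sndP) x := by
      rw [← Pseudoelement.comp_apply]
      have : L ≫ sndP = vB := by simp [hL, hsndP]
      rw [this, hm]
    obtain ⟨z, hz0, hzp⟩ := Pseudoelement.sub_of_eq_image sndP x ((L) m) hsnd.symm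
    have hLy : ∀ (R : C) (q : cokernel (ib ≫ f) ⊞ cokernel (ia ≫ f) ⟶ R), L ≫ q = 0 →
        (q) ((L) m) = 0 := by
      intro R q hq
      rw [← Pseudoelement.comp_apply, hq, Pseudoelement.zero_apply]
    have hdz : (d) z = 0 := by
      rw [hzp _ d (hLy _ d hzero)]; exact hx
    have hQz : (cokernel.π L) z = (cokernel.π L) x :=
      hzp _ (cokernel.π L) (hLy _ _ (cokernel.condition L))
    obtain ⟨eA, heA0⟩ := pexIS z hz0
    have heA : Pseudoelement.pseudoApply inlP eA = z := heA0
    have hpAeA : (pA) eA = 0 := by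
      have hid : inlP ≫ d = pA := by simp [hd, hinlP]
      rw [← hid, Pseudoelement.comp_apply, heA]; exact hdz
    obtain ⟨a, haa⟩ := pexA eA hpAeA
    have hQz0 : (cokernel.π L) z = 0 := by
      have key : ((ia ≫ f ≫ vA) ≫ inlP) ≫ cokernel.π L = 0 := by
        rw [← id2, Category.assoc, cokernel.condition, comp_zero]
      rw [← heA, ← haa, ← Pseudoelement.comp_apply, ← Pseudoelement.comp_apply,
        ← Category.assoc, key, Pseudoelement.zero_apply]
    rw [hQz0] at hQz
    exact pexQ x hQz.symm
  · -- mono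
    apply Pseudoelement.mono_of_zero_of_map_zero
    intro x hxL
    have hvAx : (vA) x = 0 := by
      have : L ≫ biprod.fst = vA := by simp [hL]
      rw [← this, Pseudoelement.comp_apply, hxL, Pseudoelement.apply_zero]
    have hvBx : (vB) x = 0 := by
      have : L ≫ biprod.snd = vB := by simp [hL]
      rw [← this, Pseudoelement.comp_apply, hxL, Pseudoelement.apply_zero]
    obtain ⟨b, hb⟩ := pexB x hvAx
    have : (ib ≫ f ≫ vB) b = 0 := by
      rw [show ib ≫ f ≫ vB = (ib ≫ f) ≫ vB by rw [Category.assoc],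
        Pseudoelement.comp_apply, hb, hvBx]
    have hb0 : b = 0 := by
      apply Pseudoelement.zero_of_map_zero _ (Pseudoelement.pseudo_injective_of_mono _) _ this
    rw [hb0, Pseudoelement.apply_zero] at hb
    exact hb.symm
  · -- epi
    have hid : inlP ≫ d = pA := by simp [hd, hinlP]
    have : Epi pA := epi_of_epi_fac (cokernel.π_desc (ib ≫ f) g _)
    exact epi_of_epi_fac hid

private noncomputable def peelIso (n : ℕ) (fn : Fin (n + 1) → C) :
    (⨁ fn) ≅ (fn 0) ⊞ (⨁ fun i : Fin n => fn i.succ) := by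
  have key0 : biproduct.ι fn 0 ≫ (biproduct.lift fun k : Fin n => biproduct.π fn k.succ) = 0 := by
    apply biproduct.hom_ext; intro k
    simp [biproduct.ι_π_ne _ (Fin.succ_ne_zero k).symm]
  have keyS : ∀ i : Fin n, biproduct.ι fn i.succ ≫
      (biproduct.lift fun k : Fin n => biproduct.π fn k.succ)
      = biproduct.ι (fun k : Fin n => fn k.succ) i := by
    intro i
    apply biproduct.hom_ext; intro k
    simp only [Category.assoc, biproduct.lift_π, biproduct.ι_π]
    by_cases h : i = k
    · subst h; simp
    · rw [dif_neg h, dif_neg (fun hh => h (Fin.succ_injective _ hh))]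
  exact
  { hom := biprod.lift (biproduct.π fn 0) (biproduct.lift fun i => biproduct.π fn i.succ)
    inv := biprod.desc (biproduct.ι fn 0) (biproduct.desc fun i => biproduct.ι fn i.succ)
    hom_inv_id := by
      apply biproduct.hom_ext'; intro j
      rw [biprod.lift_desc]
      induction j using Fin.cases with
      | zero =>
        simp only [Preadditive.comp_add, ← Category.assoc, key0, biproduct.ι_π_self,
          Category.id_comp, Category.comp_id, zero_comp, add_zero]
      | succ i =>
        simp only [Preadditive.comp_add, ← Category.assoc, keyS,
          biproduct.ι_π_ne _ (Fin.succ_ne_zero i), zero_comp, zero_add, biproduct.ι_desc,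
          Category.comp_id]
    inv_hom_id := by
      apply biprod.hom_ext'
      · apply biprod.hom_ext
        · simp
        · simp only [Category.assoc, biprod.inl_desc_assoc, biprod.lift_snd, key0,
            biprod.inl_snd, Category.comp_id]
      · apply biprod.hom_ext
        · simp only [Category.assoc, biprod.inr_desc_assoc, biprod.lift_fst, biprod.inr_fst,
            Category.comp_id]
          apply biproduct.hom_ext'; intro i
          simp [biproduct.ι_π_ne _ (Fin.succ_ne_zero i)]
        · simp only [Category.assoc, biprod.inr_desc_assoc, biprod.lift_snd, biprod.inr_snd,
            Category.comp_id]
          apply biproduct.hom_ext'; intro i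
          simp [keyS] }

private lemma main_aux (p₀ : ℕ) (hMid : SatisfiesMid C p₀) (R : C → Prop)
    (hR : IsAdditiveSubcat R) (hext : ClosedUnderExtensions R)
    (hii : ∀ S : ShortComplex C, S.ShortExact → R S.X₂ → AtMostIndecSummands p₀ S.X₂ →
        R S.X₃ → Indecomposable S.X₃ → R S.X₁) :
    ∀ (n : ℕ) (S : ShortComplex C), S.ShortExact → R S.X₂ → R S.X₃ → Indecomposable S.X₃ →
      ∀ (fn : Fin n → C), (∀ i, Indecomposable (fn i)) → (S.X₁ ≅ ⨁ fn) → R S.X₁ := by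
  intro n
  induction n with
  | zero =>
    intro S hS hM hY hYind fn hfn e
    open ZeroObject in
    have hz : IsZero (⨁ fn) := by
      rw [IsZero.iff_id_eq_zero]
      apply biproduct.hom_ext; intro j; exact j.elim0
    have hR0 : R (0 : C) :=
      (hR.2.2 (hR.1 (isoBiprodZero (isZero_zero C) : S.X₃ ≅ S.X₃ ⊞ (0 : C)) hY)).2
    exact hR.1 (e.trans hz.isoZero).symm hR0
  | succ n IH =>
    intro S hS hM hY hYind fn hfn e
    have e2 : S.X₁ ≅ (fn 0) ⊞ (⨁ fun i : Fin n => fn i.succ) := e.trans (peelIso n fn)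
    have w : (e2.inv ≫ S.f) ≫ S.g = 0 := by rw [Category.assoc, S.zero, comp_zero]
    haveI : Mono S.f := hS.mono_f
    have hse : (ShortComplex.mk (e2.inv ≫ S.f) S.g w).ShortExact :=
      ShortComplex.shortExact_of_iso
        (ShortComplex.isoMk e2 (Iso.refl _) (Iso.refl _) (by simp) (by simp)) hS
    have hsideA := side_shortExact biprod.inl biprod.inr biprod.fst (by simp) (by simp)
      biprod.snd biprod.total (e2.inv ≫ S.f) S.g w hse
    have hsideB := side_shortExact biprod.inr biprod.inl biprod.snd (by simp) (by simp)
      biprod.fst (by rw [← biprod.total]; exact add_comm _ _) (e2.inv ≫ S.f) S.g w hse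
    have hmid := middle_shortExact biprod.inl biprod.inr biprod.fst biprod.snd
      (by simp) (by simp) (by simp) (by simp) biprod.total (e2.inv ≫ S.f) S.g w hse
      hsideA.mono_f hsideB.mono_f
      (Pseudoelement.pseudo_exact_of_exact hsideA.exact)
    have hRmid : R (cokernel (biprod.inr ≫ (e2.inv ≫ S.f))
        ⊞ cokernel (biprod.inl ≫ (e2.inv ≫ S.f))) :=
      hext _ hmid hM hY
    obtain ⟨hREA, hREB⟩ := hR.2.2 hRmid
    have hAtMost : AtMostIndecSummands p₀ (cokernel (biprod.inr ≫ (e2.inv ≫ S.f))) :=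
      hMid _ hsideA (hfn 0) hYind
    have hRA : R (fn 0) := hii _ hsideA hREA hAtMost hY hYind
    have hRB : R (⨁ fun i : Fin n => fn i.succ) :=
      IH _ hsideB hREB hY hYind (fun i => fn i.succ) (fun i => hfn i.succ) (Iso.refl _)
    exact hR.1 e2.symm (hR.2.1 hRA hRB)

end AuxiliaryLemmas

/-- In a Krull–Schmidt abelian category with enough projectives satisfying
`(Mid)_{p₀}`, for an additive subcategory closed under extensions, the restricted kernel
condition `(R'3)` is equivalent to the condition `(R''3)_{p₀}` in which the middle term is
moreover required to admit at most `p₀` indecomposable direct summands. -/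
theorem restrictedKernels_iff_midRestrictedKernels
    (C : Type u) [Category.{v} C] [Abelian C] [EnoughProjectives C]
    (hKS : IsKrullSchmidtCat C) (p₀ : ℕ) (hp₀ : 0 < p₀) (hMid : SatisfiesMid C p₀)
    (R : C → Prop) (hR : IsAdditiveSubcat R) (hext : ClosedUnderExtensions R) :
    (∀ S : ShortComplex C, S.ShortExact → R S.X₂ → R S.X₃ → Indecomposable S.X₃ →
        R S.X₁) ↔
    (∀ S : ShortComplex C, S.ShortExact → R S.X₂ → AtMostIndecSummands p₀ S.X₂ →
        R S.X₃ → Indecomposable S.X₃ → R S.X₁) := by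
  constructor
  · intro h S hS h2 _ h3 h4
    exact h S hS h2 h3 h4
  · intro h S hS h2 h3 h4
    obtain ⟨n, fn, hfn, ⟨e⟩⟩ := hKS S.X₁
    exact main_aux p₀ hMid R hR hext h n S hS h2 h3 h4 fn (fun i => (hfn i).1) e
end

section
/- Let C be an abelian category. Let 0 → M → E → N → 0 be a short exact sequence in C and suppose M decomposes as a finite direct sum M = M_0 ⊕ M_1 ⊕ ⋯ ⊕ M_n. For each i ∈ {0, …, n}, let 0 → M_i → E_i → N → 0 be the short exact sequence obtained by pushing out the given sequence along the projection M → M_i. Then there is a short exact sequence 0 → E → (⊕_{i=0}^n E_i) ⊕ N → ⊕_{i=0}^n N → 0. -/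
open CategoryTheory Limits

attribute [local instance] CategoryTheory.Abelian.hasFiniteBiproducts

universe v u

/-!
The pushout maps `E → Eᵢ` assemble into a morphism from `0 → M → E → N → 0` to the direct sum
`0 → ⊕ᵢ Mᵢ → ⊕ᵢ Eᵢ → ⊕ᵢ N → 0` of the pushout sequences, which is the identity on `M = ⊕ᵢ Mᵢ`
and the diagonal on `N`. For any morphism of short exact sequences that is an isomorphism on the
first terms, the right-hand square is a pullback, i.e. `0 → E → (⊕ᵢ Eᵢ) ⊕ N → ⊕ᵢ N` is exact;
the last map is onto because `⊕ᵢ Eᵢ → ⊕ᵢ N` is.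
-/

namespace CategoryTheory.ShortComplex

open Category Preadditive

variable {C : Type u} [Category.{v} C] [Abelian C]

section Pushout

variable (S : ShortComplex C) {M' : C} (φ : S.X₁ ⟶ M')

noncomputable abbrev pushout : ShortComplex C where
  X₁ := M'
  X₂ := Limits.pushout φ S.f
  X₃ := S.X₃
  f := pushout.inl φ S.f
  g := pushout.desc 0 S.g (by simp)
  zero := pushout.inl_desc _ _ _

@[simps]
noncomputable def toPushout : S ⟶ S.pushout φ where
  τ₁ := φ
  τ₂ := pushout.inr φ S.f
  τ₃ := 𝟙 S.X₃
  comm₁₂ := pushout.condition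
  comm₂₃ := (pushout.inr_desc _ _ _).trans (comp_id _).symm

variable {S}

lemma ShortExact.pushout (hS : S.ShortExact) : (S.pushout φ).ShortExact := by
  have := hS.mono_f
  have := hS.epi_g
  refine .mk' ?_ inferInstance
    (epi_of_epi_fac (pushout.inr_desc (0 : M' ⟶ S.X₃) S.g (by simp)))
  rw [exact_iff_exact_up_to_refinements]
  intro T x hx
  obtain ⟨T₁, π₁, _, x₁, x₂, hx₁₂⟩ :=
    (IsPushout.of_hasPushout φ S.f).hom_eq_add_up_to_refinements x
  have hx₂ : x₂ ≫ S.g = 0 := by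
    have := hx₁₂.symm =≫ (S.pushout φ).g
    rwa [add_comp, assoc, assoc, pushout.inl_desc, pushout.inr_desc, comp_zero, zero_add,
      assoc, hx, comp_zero] at this
  obtain ⟨T₂, π₂, _, m, hm⟩ := hS.exact.exact_up_to_refinements x₂ hx₂
  refine ⟨T₂, π₂ ≫ π₁, epi_comp _ _, π₂ ≫ x₁ + m ≫ φ, ?_⟩
  rw [assoc, hx₁₂, comp_add, reassoc_of% hm, ← pushout.condition, add_comp, assoc, assoc]

end Pushout

section Biproduct

variable {ι : Type*} [Finite ι]

noncomputable abbrev biproduct (S : ι → ShortComplex C) : ShortComplex C where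
  X₁ := ⨁ fun i => (S i).X₁
  X₂ := ⨁ fun i => (S i).X₂
  X₃ := ⨁ fun i => (S i).X₃
  f := biproduct.map fun i => (S i).f
  g := biproduct.map fun i => (S i).g
  zero := by ext; simp

@[simps]
noncomputable def biproductLift {S : ShortComplex C} {T : ι → ShortComplex C} (φ : ∀ i, S ⟶ T i) :
    S ⟶ biproduct T where
  τ₁ := biproduct.lift fun i => (φ i).τ₁
  τ₂ := biproduct.lift fun i => (φ i).τ₂
  τ₃ := biproduct.lift fun i => (φ i).τ₃
  comm₁₂ := by ext i; simpa using (φ i).comm₁₂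
  comm₂₃ := by ext i; simpa using (φ i).comm₂₃

lemma ShortExact.biproduct {S : ι → ShortComplex C} (hS : ∀ i, (S i).ShortExact) :
    (ShortComplex.biproduct S).ShortExact := by
  have := fun i => (hS i).mono_f
  have := fun i => (hS i).epi_g
  refine .mk' ?_ (show Mono (biproduct.map fun i => (S i).f) from inferInstance)
    (show Epi (biproduct.map fun i => (S i).g) from inferInstance)
  rw [exact_iff_exact_up_to_refinements]
  intro T x hx
  refine ⟨T, 𝟙 T, inferInstance,
    biproduct.lift fun i => (hS i).exact.lift (x ≫ biproduct.π _ i) ?_, ?_⟩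
  · simpa using hx =≫ biproduct.π _ i
  · ext i
    simp

end Biproduct

namespace Hom

variable {S₁ S₂ : ShortComplex C} (φ : S₁ ⟶ S₂)

lemma commSq₂₃ : CommSq φ.τ₂ S₁.g S₂.g φ.τ₃ := ⟨φ.comm₂₃⟩

lemma mono_commSq₂₃_shortComplex'_f (h₁ : S₁.Exact) [Mono S₂.f] [Mono φ.τ₁] :
    Mono φ.commSq₂₃.shortComplex'.f := by
  dsimp only [CommSq.shortComplex']
  refine mono_of_cancel_zero _ fun {T} z hz => ?_
  have hτ₂ : z ≫ φ.τ₂ = 0 := by simpa using hz =≫ biprod.fst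
  have hg : z ≫ S₁.g = 0 := by simpa using hz =≫ biprod.snd
  obtain ⟨T', π, _, m, hm⟩ := h₁.exact_up_to_refinements z hg
  have hm₀ : m = 0 := by
    rw [← cancel_mono (φ.τ₁ ≫ S₂.f), zero_comp, φ.comm₁₂, ← reassoc_of% hm, hτ₂, comp_zero]
  rw [← cancel_epi π, hm, hm₀, zero_comp, comp_zero]

lemma exact_commSq₂₃_shortComplex' (h₂ : S₂.Exact) [Epi S₁.g] [IsIso φ.τ₁] :
    φ.commSq₂₃.shortComplex'.Exact := by
  rw [exact_iff_exact_up_to_refinements]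
  dsimp only [CommSq.shortComplex']
  intro T x hx
  have hx' : x ≫ biprod.fst ≫ S₂.g = x ≫ biprod.snd ≫ φ.τ₃ := by
    simp only [biprod.desc_eq, comp_add, comp_neg] at hx
    exact add_neg_eq_zero.mp hx
  -- Lift the `S₁.X₃`-component through `S₁.g`; the error in the `S₂.X₂`-component then comes
  -- from `S₂.X₁ ≅ S₁.X₁`.
  obtain ⟨T₁, π₁, _, e, he⟩ := surjective_up_to_refinements_of_epi S₁.g (x ≫ biprod.snd)
  obtain ⟨T₂, π₂, _, m, hm⟩ :=
    h₂.exact_up_to_refinements (π₁ ≫ x ≫ biprod.fst - e ≫ φ.τ₂) (by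
      rw [sub_comp, assoc, assoc, assoc, hx', reassoc_of% he, φ.comm₂₃, sub_self])
  refine ⟨T₂, π₂ ≫ π₁, epi_comp _ _, π₂ ≫ e + m ≫ inv φ.τ₁ ≫ S₁.f, ?_⟩
  apply biprod.hom_ext
  · simp only [assoc, add_comp, biprod.lift_fst, ← φ.comm₁₂, IsIso.inv_hom_id_assoc, ← hm,
      comp_sub]
    abel
  · simp [he]

lemma shortExact_commSq₂₃_shortComplex' (h₁ : S₁.Exact) [Epi S₁.g] (h₂ : S₂.ShortExact)
    [IsIso φ.τ₁] : φ.commSq₂₃.shortComplex'.ShortExact := by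
  have := h₂.mono_f
  have := h₂.epi_g
  refine .mk' (φ.exact_commSq₂₃_shortComplex' h₂.exact) (φ.mono_commSq₂₃_shortComplex'_f h₁) ?_
  dsimp only [CommSq.shortComplex']
  exact epi_of_epi_fac (biprod.inl_desc _ _)

end Hom

end CategoryTheory.ShortComplex

/-- Let `0 → M → E → N → 0` be a short exact sequence in an abelian
category with `M = M₀ ⊕ ⋯ ⊕ Mₙ`, and for each `i` let `0 → Mᵢ → Eᵢ → N → 0` be the short
exact sequence obtained by pushing out along the projection `M → Mᵢ` (so that
`Eᵢ = pushout (πᵢ) f`). Then there is a short exact sequence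
`0 → E → (⊕ᵢ Eᵢ) ⊕ N → ⊕ᵢ N → 0`. -/
theorem pushout_summing_shortExact
    (C : Type u) [Category.{v} C] [Abelian C]
    (n : ℕ) (M : Fin (n + 1) → C) (E N : C)
    (f : (⨁ M) ⟶ E) (g : E ⟶ N) (w : f ≫ g = 0)
    (hS : (ShortComplex.mk f g w).ShortExact) :
    ∃ (a : E ⟶ (⨁ fun i => pushout (biproduct.π M i) f) ⊞ N)
      (b : ((⨁ fun i => pushout (biproduct.π M i) f) ⊞ N) ⟶ ⨁ fun _ : Fin (n + 1) => N)
      (w' : a ≫ b = 0), (ShortComplex.mk a b w').ShortExact := by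
  set S := ShortComplex.mk f g w
  let φ := ShortComplex.biproductLift fun i => S.toPushout (biproduct.π M i)
  have hτ₁ : φ.τ₁ = 𝟙 _ := by ext; simp [φ]
  have : IsIso φ.τ₁ := hτ₁ ▸ inferInstance
  have := hS.epi_g
  exact ⟨_, _, _, φ.shortExact_commSq₂₃_shortComplex' hS.exact
    (.biproduct fun i => hS.pushout (biproduct.π M i))⟩
end

section
/- Let (Q,R) be a gentle quiver, let p ≥ 2 be an integer, let μ be a string of (Q,R), and let (σ_1, …, σ_p) be a reduced p-cover of μ. Then for every i ∈ {1, …, p−1} there exists a unique triple of strings (σ_i^ℓ, σ_{i,i+1}, σ_{i+1}^r) such that σ_i = σ_{i,i+1} · σ_i^ℓ, σ_{i+1} = σ_{i+1}^r · σ_{i,i+1}, and σ_{i,i+1} is maximal (for inclusion) among the common substrings of σ_i and σ_{i+1} satisfying these two equalities. -/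
/-- A finite quiver: finite types of vertices and arrows with source and target maps. -/
structure GQuiver where
  V : Type
  A : Type
  finV : Finite V
  finA : Finite A
  s : A → V
  t : A → V

namespace GQuiver

variable (Q : GQuiver)

/-- A letter of a walk: an arrow taken directly (`true`) or formally inverted (`false`). -/
abbrev Letter := Q.A × Bool

/-- The source of a letter. -/
def lSrc (x : Q.Letter) : Q.V := if x.2 then Q.s x.1 else Q.t x.1

/-- The target of a letter. -/
def lTgt (x : Q.Letter) : Q.V := if x.2 then Q.t x.1 else Q.s x.1

/-- A walk of `Q`: a source vertex together with a composable list of letters, written in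
order of application (the first letter of the list is applied first).  A lazy walk is the
walk with empty list of letters. -/
structure Walk where
  src : Q.V
  letters : List Q.Letter
  chain : letters.Chain' (fun x y => Q.lTgt x = Q.lSrc y)
  head_src : ∀ x ∈ letters.head?, Q.lSrc x = src

/-- `(Q, R)` is a gentle quiver.  A pair `(β, α) ∈ R` stands for the length-two path `βα`
(with `s β = t α`). -/
structure IsGentle (R : Set (Q.A × Q.A)) : Prop where
  /-- relations are composable length-two paths -/
  composable : ∀ r ∈ R, Q.s r.1 = Q.t r.2
  /-- at most two incoming arrows at each vertex -/
  at_most_two_in : ∀ (v : Q.V) (a b c : Q.A), Q.t a = v → Q.t b = v → Q.t c = v →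
    a = b ∨ a = c ∨ b = c
  /-- at most two outgoing arrows at each vertex -/
  at_most_two_out : ∀ (v : Q.V) (a b c : Q.A), Q.s a = v → Q.s b = v → Q.s c = v →
    a = b ∨ a = c ∨ b = c
  /-- at most one `β` with `s β = t α` and `βα ∈ R` -/
  unique_rel_post : ∀ α β β' : Q.A, Q.s β = Q.t α → Q.s β' = Q.t α →
    (β, α) ∈ R → (β', α) ∈ R → β = β'
  /-- at most one `γ` with `s γ = t α` and `γα ∉ R` -/
  unique_nonrel_post : ∀ α γ γ' : Q.A, Q.s γ = Q.t α → Q.s γ' = Q.t α →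
    (γ, α) ∉ R → (γ', α) ∉ R → γ = γ'
  /-- at most one `β'` with `t β' = s α` and `αβ' ∈ R` -/
  unique_rel_pre : ∀ α β β' : Q.A, Q.t β = Q.s α → Q.t β' = Q.s α →
    (α, β) ∈ R → (α, β') ∈ R → β = β'
  /-- at most one `γ'` with `t γ' = s α` and `αγ' ∉ R` -/
  unique_nonrel_pre : ∀ α γ γ' : Q.A, Q.t γ = Q.s α → Q.t γ' = Q.s α →
    (α, γ) ∉ R → (α, γ') ∉ R → γ = γ'
  /-- every cyclic path of `Q` contains two (cyclically) consecutive arrows composing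
  to a relation -/
  no_rel_free_cycle : ∀ (c : List Q.A) (hc : c ≠ []),
    c.Chain' (fun a b => Q.t a = Q.s b) → Q.s (c.head hc) = Q.t (c.getLast hc) →
    (∃ (l₁ l₂ : List Q.A) (a b : Q.A), c = l₁ ++ a :: b :: l₂ ∧ (b, a) ∈ R) ∨
      (c.head hc, c.getLast hc) ∈ R

/-- The condition on two consecutive letters of a string : the walk is reduced, and no two
consecutive direct (resp. inverse) letters compose to a relation. -/
def stringPair (R : Set (Q.A × Q.A)) (x y : Q.Letter) : Prop :=
  (x.2 ≠ y.2 → x.1 ≠ y.1) ∧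
  (x.2 = true → y.2 = true → (y.1, x.1) ∉ R) ∧
  (x.2 = false → y.2 = false → (x.1, y.1) ∉ R)

/-- A walk is a string of `(Q, R)` when all pairs of consecutive letters satisfy the
string condition. -/
def IsString (R : Set (Q.A × Q.A)) (w : Q.Walk) : Prop :=
  w.letters.Chain' (Q.stringPair R)

/-- The list of letters of the substring of the walk `w` at position `q = (offset, length)`. -/
def subLetters (w : Q.Walk) (q : ℕ × ℕ) : List Q.Letter :=
  (w.letters.drop q.1).take q.2

/-- `(σ 0, …, σ (p-1))` — substrings of `μ` recorded by their positions
`(offset, length)` — is a `p`-cover of `μ`: there are substrings `τ i` of the `σ i`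
(given by subintervals) which tile `μ`, i.e. `μ = τ (p-1) ⋯ τ 0` as concatenation. -/
def IsCover (μ : Q.Walk) {p : ℕ} (σ : Fin p → ℕ × ℕ) : Prop :=
  0 < p ∧
  (∀ i, (σ i).1 + (σ i).2 ≤ μ.letters.length) ∧
  ∃ τ : Fin p → ℕ × ℕ,
    (∀ i, (σ i).1 ≤ (τ i).1 ∧ (τ i).1 + (τ i).2 ≤ (σ i).1 + (σ i).2) ∧
    (∀ i, (τ i).1 = ∑ j : Fin p, if j < i then (τ j).2 else 0) ∧
    (∑ j : Fin p, (τ j).2) = μ.letters.length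

/-- A `p`-cover is reduced if no subtuple of length `j < p` is a `j`-cover of `μ`. -/
def IsReducedCover (μ : Q.Walk) {p : ℕ} (σ : Fin p → ℕ × ℕ) : Prop :=
  Q.IsCover μ σ ∧ ∀ j : ℕ, j < p → ∀ ι : Fin j → Fin p, ¬ Q.IsCover μ (σ ∘ ι)

end GQuiver

open GQuiver

/-- Let `(Q, R)` be a gentle quiver, `p ≥ 2`, `μ` a string of `(Q, R)` and
`(σ 0, …, σ (p-1))` a reduced `p`-cover of `μ`.  Then for every `i` with `i + 1 < p` there is
a unique triple of strings `(σᵢˡ, σ_{i,i+1}, σᵢ₊₁ʳ)` (recorded by their lists of letters)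
such that `σ i = σ_{i,i+1} · σᵢˡ`, `σ (i+1) = σᵢ₊₁ʳ · σ_{i,i+1}`, and `σ_{i,i+1}` is maximal
for inclusion among the common substrings of `σ i` and `σ (i+1)` satisfying these two
equalities. -/
theorem reducedCover_unique_overlap_triple
    (Q : GQuiver) (R : Set (Q.A × Q.A)) (hQR : Q.IsGentle R)
    (p : ℕ) (hp : 2 ≤ p) (μ : Q.Walk) (hμ : Q.IsString R μ)
    (σ : Fin p → ℕ × ℕ) (hσ : Q.IsReducedCover μ σ)
    (i : ℕ) (hi : i + 1 < p) :
    ∃! T : List Q.Letter × List Q.Letter × List Q.Letter,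
      Q.subLetters μ (σ ⟨i, lt_trans (Nat.lt_succ_self i) hi⟩) = T.1 ++ T.2.1 ∧
      Q.subLetters μ (σ ⟨i + 1, hi⟩) = T.2.1 ++ T.2.2 ∧
      ∀ ν x y : List Q.Letter,
        Q.subLetters μ (σ ⟨i, lt_trans (Nat.lt_succ_self i) hi⟩) = x ++ ν →
        Q.subLetters μ (σ ⟨i + 1, hi⟩) = ν ++ y →
        ν.length ≤ T.2.1.length := by
  classical
  set A := Q.subLetters μ (σ ⟨i, lt_trans (Nat.lt_succ_self i) hi⟩) with hA
  set B := Q.subLetters μ (σ ⟨i + 1, hi⟩) with hB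
  set P : ℕ → Prop := fun n => n ≤ A.length ∧ A.drop (A.length - n) = B.take n with hPdef
  have hP0 : P 0 := ⟨Nat.zero_le _, by simp⟩
  set n := Nat.findGreatest P A.length with hn
  have hPn : P n := Nat.findGreatest_spec (Nat.zero_le _) hP0
  have hdropLen : (A.drop (A.length - n)).length = n := by
    rw [List.length_drop]; omega
  have key : ∀ ν x y : List Q.Letter, A = x ++ ν → B = ν ++ y → ν.length ≤ n := by
    intro ν x y hx hy
    apply Nat.le_findGreatest
    · rw [hx, List.length_append]; omega
    · refine ⟨by rw [hx, List.length_append]; omega, ?_⟩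
      rw [hx, hy, List.length_append, Nat.add_sub_cancel, List.drop_left, List.take_left]
  have hAeq : A = A.take (A.length - n) ++ A.drop (A.length - n) :=
    (List.take_append_drop _ A).symm
  have hBeq : B = A.drop (A.length - n) ++ B.drop n := by
    rw [hPn.2]; exact (List.take_append_drop _ B).symm
  refine ⟨(A.take (A.length - n), A.drop (A.length - n), B.drop n), ⟨hAeq, hBeq, ?_⟩, ?_⟩
  · intro ν x y hx hy
    rw [hdropLen]; exact key ν x y hx hy
  · rintro ⟨x', ν', y'⟩ ⟨h1, h2, h3⟩
    dsimp only at h1 h2 h3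
    have hlen1 : ν'.length ≤ n := key ν' x' y' h1 h2
    have hlen2 : n ≤ ν'.length := by
      have := h3 (A.drop (A.length - n)) (A.take (A.length - n)) (B.drop n) hAeq hBeq
      rwa [hdropLen] at this
    have hlen : ν'.length = n := le_antisymm hlen1 hlen2
    have hx'len : x'.length = A.length - n := by
      have := congrArg List.length h1
      rw [List.length_append] at this; omega
    have hν : ν' = A.drop (A.length - n) := by
      rw [← hx'len, h1, List.drop_left]
    rw [hν] at h1 h2
    have hx' : x' = A.take (A.length - n) :=
      List.append_cancel_right (h1.symm.trans hAeq)
    have hy' : y' = B.drop n :=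
      List.append_cancel_left (h2.symm.trans hBeq)
    simp [hx', hν, hy']
end
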